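/- arXiv:1601.00175 — 5 statements merged into one kernel-verified Lean document; each statement's English description precedes it below -/
import Mathlib

section
/- Let t ∈ [0,T], ω ∈ Ω, let τ be a stopping time with τ(ω'') ≥ t for all ω'' ∈ 𝒜(t,ω), and let ω' ∈ 𝒜(t,ω) satisfy τ(ω') < σ*(ω'). Then R(t,ω;τ,ω') ≥ ψ(τ(ω'), ω') > ψ(σ*(ω'), ω') = R(t,ω;σ*,ω'). -/
open Set

noncomputable section

namespace SellingRegret

/-- Running maximum `X*_t(ω) = sup_{s ∈ [0,t]} X_s(ω)`, where `X_s(ω) = ω s`. -/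
def Mstar (ω : ℝ → ℝ) (t : ℝ) : ℝ :=
  sSup (ω '' Set.Icc 0 t)

/-- `𝒜(t,ω)`: the trajectories in `Ω` agreeing with `ω` on `[0,t]`. -/
def Hist (Ω : Set (ℝ → ℝ)) (t : ℝ) (ω : ℝ → ℝ) : Set (ℝ → ℝ) :=
  {ω' ∈ Ω | ∀ s ∈ Set.Icc 0 t, ω' s = ω s}

/-- A stopping time: a map `τ : Ω → [0,T]` such that whenever `τ(ω) ≤ t` and
`ω'` agrees with `ω` on `[0,t]`, one has `τ(ω') = τ(ω)`. -/
def IsStoppingTime (T : ℝ) (Ω : Set (ℝ → ℝ)) (τ : (ℝ → ℝ) → ℝ) : Prop :=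
  (∀ ω ∈ Ω, τ ω ∈ Set.Icc 0 T) ∧
  ∀ ω ∈ Ω, ∀ t ∈ Set.Icc 0 T, τ ω ≤ t →
    ∀ ω' ∈ Ω, (∀ s ∈ Set.Icc 0 t, ω' s = ω s) → τ ω' = τ ω

/-- Estimated regret `R(t,ω;τ,ω') = max{X*_{τ(ω')}(ω') − X_{τ(ω')}(ω'), ψ(τ(ω'),ω')}`
(it depends only on `τ` and `ω'`). -/
def regret (ψ : ℝ → (ℝ → ℝ) → ℝ) (τ : (ℝ → ℝ) → ℝ) (ω' : ℝ → ℝ) : ℝ :=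
  max (Mstar ω' (τ ω') - ω' (τ ω')) (ψ (τ ω') ω')

/-- Worst-case estimated regret `ℛ(t,ω;τ) = sup_{ω' ∈ 𝒜(t,ω)} R(t,ω;τ,ω')`,
valued in `[0,∞]`. -/
def worstRegret (Ω : Set (ℝ → ℝ)) (ψ : ℝ → (ℝ → ℝ) → ℝ)
    (t : ℝ) (ω : ℝ → ℝ) (τ : (ℝ → ℝ) → ℝ) : ENNReal :=
  ⨆ ω' ∈ Hist Ω t ω, ENNReal.ofReal (regret ψ τ ω')

/-- `σ*(ω) = inf {s ∈ [0,T] : X*_s(ω) − X_s(ω) ≥ ψ(s,ω)}`. -/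
def sigmaStar (T : ℝ) (ψ : ℝ → (ℝ → ℝ) → ℝ) (ω : ℝ → ℝ) : ℝ :=
  sInf {s ∈ Set.Icc 0 T | ψ s ω ≤ Mstar ω s - ω s}

/-- `τ ∈ 𝒯_t(ω)`: `τ(ω') ≥ t` for all `ω' ∈ 𝒜(t,ω)`. -/
def Admissible (Ω : Set (ℝ → ℝ)) (t : ℝ) (ω : ℝ → ℝ) (τ : (ℝ → ℝ) → ℝ) : Prop :=
  ∀ ω' ∈ Hist Ω t ω, t ≤ τ ω'

/-- `σ` is optimal with respect to `𝒜(t,ω)`. -/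
def OptimalAt (T : ℝ) (Ω : Set (ℝ → ℝ)) (ψ : ℝ → (ℝ → ℝ) → ℝ)
    (t : ℝ) (ω : ℝ → ℝ) (σ : (ℝ → ℝ) → ℝ) : Prop :=
  IsStoppingTime T Ω σ ∧ Admissible Ω t ω σ ∧
  ∀ τ, IsStoppingTime T Ω τ → Admissible Ω t ω τ →
    worstRegret Ω ψ t ω σ ≤ worstRegret Ω ψ t ω τ

/-- `σ` is Pareto optimal with respect to `𝒜(t,ω)`. -/
def ParetoOptimalAt (T : ℝ) (Ω : Set (ℝ → ℝ)) (ψ : ℝ → (ℝ → ℝ) → ℝ)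
    (t : ℝ) (ω : ℝ → ℝ) (σ : (ℝ → ℝ) → ℝ) : Prop :=
  IsStoppingTime T Ω σ ∧ Admissible Ω t ω σ ∧
  ¬ ∃ τ, IsStoppingTime T Ω τ ∧ Admissible Ω t ω τ ∧
      (∀ ω' ∈ Hist Ω t ω, regret ψ τ ω' ≤ regret ψ σ ω') ∧
      ∃ ω'' ∈ Hist Ω t ω, regret ψ τ ω'' < regret ψ σ ω''

/-- `σ` is perfect: optimal and Pareto optimal with respect to `𝒜(t,ω)`
whenever it is admissible for `𝒜(t,ω)`. -/
def Perfect (T : ℝ) (Ω : Set (ℝ → ℝ)) (ψ : ℝ → (ℝ → ℝ) → ℝ)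
    (σ : (ℝ → ℝ) → ℝ) : Prop :=
  IsStoppingTime T Ω σ ∧
  ∀ t ∈ Set.Icc 0 T, ∀ ω ∈ Ω, Admissible Ω t ω σ →
    OptimalAt T Ω ψ t ω σ ∧ ParetoOptimalAt T Ω ψ t ω σ

/-- Conditions (A) and (B) of Theorem 2 for a stopping time `σ`. -/
def CondAB (T : ℝ) (Ω : Set (ℝ → ℝ)) (ψ : ℝ → (ℝ → ℝ) → ℝ)
    (σ : (ℝ → ℝ) → ℝ) : Prop :=
  ∀ τ, IsStoppingTime T Ω τ → ∀ ω ∈ Ω,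
    (σ ω < τ ω → ∃ ω' ∈ Hist Ω (σ ω) ω, regret ψ σ ω' < regret ψ τ ω') ∧
    (τ ω < σ ω → ∀ ω' ∈ Hist Ω (τ ω) ω, regret ψ σ ω' < regret ψ τ ω')

/-- `Ω = C([0,T],ℝ)`: all trajectories continuous on `[0,T]`. -/
def OmegaC (T : ℝ) : Set (ℝ → ℝ) :=
  {ω | ContinuousOn ω (Set.Icc 0 T)}

/-- The two-sided Lipschitz corridor of Example 2:
`−L₁(t−s) ≤ ω(t) − ω(s) ≤ L₂(t−s)` for `0 ≤ s ≤ t ≤ T`. -/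
def OmegaL (T L₁ L₂ : ℝ) : Set (ℝ → ℝ) :=
  {ω | ∀ s t : ℝ, 0 ≤ s → s ≤ t → t ≤ T →
    -L₁ * (t - s) ≤ ω t - ω s ∧ ω t - ω s ≤ L₂ * (t - s)}

/-- if `τ` is a stopping time admissible for `𝒜(t,ω)` and
`ω' ∈ 𝒜(t,ω)` satisfies `τ(ω') < σ*(ω')`, then
`R(t,ω;τ,ω') ≥ ψ(τ(ω'),ω') > ψ(σ*(ω'),ω') = R(t,ω;σ*,ω')`. -/
theorem stmt4 (T : ℝ) (hT : 0 < T) (Ω : Set (ℝ → ℝ))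
    (hΩ : ∀ ω ∈ Ω, ContinuousOn ω (Set.Icc 0 T))
    (ψ : ℝ → (ℝ → ℝ) → ℝ)
    (hψT : ∀ ω ∈ Ω, ψ T ω = 0)
    (hψnn : ∀ ω ∈ Ω, ∀ t ∈ Set.Icc 0 T, 0 ≤ ψ t ω)
    (hψc : ∀ ω ∈ Ω, ContinuousOn (fun t => ψ t ω) (Set.Icc 0 T))
    (hψa : ∀ ω ∈ Ω, StrictAntiOn (fun t => ψ t ω) (Set.Icc 0 T))
    (hψh : ∀ t ∈ Set.Icc 0 T, ∀ ω ∈ Ω, ∀ ω' ∈ Hist Ω t ω, ψ t ω' = ψ t ω)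
    (t : ℝ) (ht : t ∈ Set.Icc 0 T) (ω : ℝ → ℝ) (hω : ω ∈ Ω)
    (τ : (ℝ → ℝ) → ℝ) (hτ : IsStoppingTime T Ω τ)
    (hadm : ∀ ω'' ∈ Hist Ω t ω, t ≤ τ ω'')
    (ω' : ℝ → ℝ) (hω' : ω' ∈ Hist Ω t ω)
    (hlt : τ ω' < sigmaStar T ψ ω') :
    ψ (τ ω') ω' ≤ regret ψ τ ω' ∧
    ψ (sigmaStar T ψ ω') ω' < ψ (τ ω') ω' ∧

    ψ (sigmaStar T ψ ω') ω' = regret ψ (sigmaStar T ψ) ω' := by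
  obtain ⟨hω'Ω, hagree⟩ := hω'
  have hτΩ := hτ.1 ω' hω'Ω
  have hcont : ContinuousOn ω' (Set.Icc 0 T) := hΩ ω' hω'Ω
  have hψcont := hψc ω' hω'Ω
  set S : Set ℝ := {s ∈ Set.Icc 0 T | ψ s ω' ≤ Mstar ω' s - ω' s} with hSdef
  have hbdd : ∀ s ∈ Set.Icc 0 T, BddAbove (ω' '' Set.Icc 0 s) := by
    intro s hs
    exact (isCompact_Icc.image_of_continuousOn
      (hcont.mono (Set.Icc_subset_Icc le_rfl hs.2))).bddAbove
  have hself : ∀ s ∈ Set.Icc 0 T, ω' s ≤ Mstar ω' s := by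
    intro s hs
    exact le_csSup (hbdd s hs) ⟨s, ⟨hs.1, le_rfl⟩, rfl⟩
  have hTIcc : T ∈ Set.Icc 0 T := ⟨le_of_lt hT, le_rfl⟩
  have hTS : T ∈ S := by
    refine ⟨hTIcc, ?_⟩
    rw [hψT ω' hω'Ω]
    linarith [hself T hTIcc]
  have hSne : S.Nonempty := ⟨T, hTS⟩
  have hSbb : BddBelow S := ⟨0, fun s hs => hs.1.1⟩
  have hσS : sigmaStar T ψ ω' = sInf S := rfl
  have hσle : sigmaStar T ψ ω' ≤ T := by rw [hσS]; exact csInf_le hSbb hTS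
  have hσ0 : 0 ≤ sigmaStar T ψ ω' := by
    rw [hσS]; exact le_csInf hSne fun s hs => hs.1.1
  have hσIcc : sigmaStar T ψ ω' ∈ Set.Icc 0 T := ⟨hσ0, hσle⟩
  set σ := sigmaStar T ψ ω' with hσdef
  -- part 2: strict inequality
  have h2 : ψ σ ω' < ψ (τ ω') ω' := hψa ω' hω'Ω hτΩ hσIcc hlt
  -- part 3: Mstar σ - ω' σ ≤ ψ σ ω'
  have h3 : Mstar ω' σ - ω' σ ≤ ψ σ ω' := by
    by_contra hc
    push_neg at hc
    -- sup is attained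
    obtain ⟨u, huIcc, humax⟩ : ∃ u ∈ Set.Icc 0 σ, ∀ v ∈ Set.Icc 0 σ, ω' v ≤ ω' u := by
      have hne : (Set.Icc (0:ℝ) σ).Nonempty := ⟨0, le_rfl, hσ0⟩
      obtain ⟨u, hu, hmax⟩ := isCompact_Icc.exists_isMaxOn hne
        (hcont.mono (Set.Icc_subset_Icc le_rfl hσle))
      exact ⟨u, hu, hmax⟩
    have huM : ω' u = Mstar ω' σ := by
      refine le_antisymm (le_csSup (hbdd σ hσIcc) ⟨u, huIcc, rfl⟩) ?_
      refine csSup_le ⟨ω' 0, 0, ⟨le_rfl, hσ0⟩, rfl⟩ ?_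
      rintro x ⟨v, hv, rfl⟩
      exact humax v hv
    have hψσnn : 0 ≤ ψ σ ω' := hψnn ω' hω'Ω σ hσIcc
    have huσ : u < σ := by
      rcases lt_or_eq_of_le huIcc.2 with h | h
      · exact h
      · exfalso; rw [h] at huM; linarith
    -- g s = Mstar ω' σ - ω' s - ψ s ω' is continuous at σ within Icc 0 T, positive at σ
    have hg : ContinuousWithinAt (fun s => Mstar ω' σ - ω' s - ψ s ω') (Set.Icc 0 T) σ := by
      exact (continuousWithinAt_const.sub (hcont σ hσIcc)).sub (hψcont σ hσIcc)
    have hgpos : (0:ℝ) < Mstar ω' σ - ω' σ - ψ σ ω' := by linarith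
    have hev : ∀ᶠ s in nhdsWithin σ (Set.Icc 0 T),
        0 < Mstar ω' σ - ω' s - ψ s ω' := hg.eventually_const_lt hgpos
    obtain ⟨δ, hδ, hball⟩ := Metric.mem_nhdsWithin_iff.mp hev
    set s := max u (σ - δ/2) with hs
    have hsu : u ≤ s := le_max_left _ _
    have hsσ : s < σ := max_lt huσ (by linarith)
    have hsIcc : s ∈ Set.Icc 0 T := ⟨le_trans huIcc.1 hsu, le_trans (le_of_lt hsσ) hσle⟩
    have hdist : dist s σ < δ := by
      rw [Real.dist_eq, abs_of_nonpos (by linarith)]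
      have : σ - δ/2 ≤ s := le_max_right _ _
      linarith
    have hgs : 0 < Mstar ω' σ - ω' s - ψ s ω' := hball ⟨Metric.mem_ball.mpr hdist, hsIcc⟩
    have hMs : Mstar ω' σ ≤ Mstar ω' s :=
      huM ▸ le_csSup (hbdd s hsIcc) ⟨u, ⟨huIcc.1, hsu⟩, rfl⟩
    have hsS : s ∈ S := ⟨hsIcc, by linarith⟩
    have : σ ≤ s := le_of_eq_of_le hσS (csInf_le hSbb hsS)
    linarith
  refine ⟨le_max_right _ _, h2, ?_⟩
  have : regret ψ (sigmaStar T ψ) ω' = max (Mstar ω' σ - ω' σ) (ψ σ ω') := rfl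
  rw [this, max_eq_right h3]

end SellingRegret

end
end

section
/- Assume that for every (t,ω) ∈ [0,T] × Ω there exists ω̂ ∈ 𝒜(t,ω) such that X_u(ω̂) < X_t(ω) for all u ∈ (t,T]. Let t ∈ [0,T], ω ∈ Ω, let τ be a stopping time with τ(ω'') ≥ t for all ω'' ∈ 𝒜(t,ω), and let ω' ∈ 𝒜(t,ω) satisfy τ(ω') > σ*(ω'). Then for any ω̂ ∈ 𝒜(σ*(ω'), ω') with X_u(ω̂) < X_{σ*(ω')}(ω') for all u ∈ (σ*(ω'), T], one has R(t,ω;τ,ω̂) ≥ X*_{σ*(ω')}(ω') − X_{τ(ω̂)}(ω̂) > X*_{σ*(ω')}(ω') − X_{σ*(ω')}(ω') = R(t,ω;σ*,ω̂). -/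
open Set

noncomputable section

namespace SellingRegret

/- With continuous paths and continuous `ψ`, the set of times at which the drawdown `X* − X` has
reached `ψ` is closed, so `σ*` belongs to it and the regret of `σ*` is the drawdown at `σ*`.
As `ω̂` agrees with `ω'` up to `σ*(ω')` and `ψ` is non-anticipating, `σ*(ω̂) = σ*(ω')`; the
stopping-time property forces `τ(ω̂) > σ*(ω')`, and after `σ*(ω')` the path `ω̂` stays strictly
below `X_{σ*(ω')}(ω')`. -/

-- `sigmaStar T ψ ω = sInf (stopSet T ψ ω)` definitionally.
def stopSet (T : ℝ) (ψ : ℝ → (ℝ → ℝ) → ℝ) (ω : ℝ → ℝ) : Set ℝ :=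
  {s ∈ Icc 0 T | ψ s ω ≤ Mstar ω s - ω s}

lemma Hist_subset_Hist {Ω : Set (ℝ → ℝ)} {ω : ℝ → ℝ} {s t : ℝ} (hst : s ≤ t) :
    Hist Ω t ω ⊆ Hist Ω s ω :=
  fun _ hω' => ⟨hω'.1, fun u hu => hω'.2 u ⟨hu.1, hu.2.trans hst⟩⟩

section Mstar

variable {ω : ℝ → ℝ} {T : ℝ}

lemma Mstar_congr {ω' : ℝ → ℝ} {s : ℝ} (h : ∀ u ∈ Icc 0 s, ω' u = ω u) :
    Mstar ω' s = Mstar ω s := by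
  rw [Mstar, Mstar, image_congr h]

lemma bddAbove_image_Icc (hc : ContinuousOn ω (Icc 0 T)) {s : ℝ} (hs : s ≤ T) :
    BddAbove (ω '' Icc 0 s) :=
  (isCompact_Icc.image_of_continuousOn hc).bddAbove.mono
    (image_mono (Icc_subset_Icc le_rfl hs))

lemma le_Mstar (hc : ContinuousOn ω (Icc 0 T)) {u s : ℝ} (hu : u ∈ Icc 0 s) (hs : s ≤ T) :
    ω u ≤ Mstar ω s :=
  le_csSup (bddAbove_image_Icc hc hs) (mem_image_of_mem ω hu)

lemma Mstar_mono (hc : ContinuousOn ω (Icc 0 T)) {s s' : ℝ} (hs : 0 ≤ s) (hss' : s ≤ s')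
    (hs' : s' ≤ T) : Mstar ω s ≤ Mstar ω s' :=
  csSup_le_csSup (bddAbove_image_Icc hc hs') ((nonempty_Icc.2 hs).image ω)
    (image_mono (Icc_subset_Icc le_rfl hss'))

/- Reparametrizing `[0,s]` as `u * s` with `u ∈ [0,1]` exhibits `Mstar ω` as the supremum over a
fixed compact set of a jointly continuous family. -/
lemma continuousOn_Mstar (hc : ContinuousOn ω (Icc 0 T)) : ContinuousOn (Mstar ω) (Icc 0 T) := by
  rcases lt_or_ge T 0 with hT | hT
  · simp [Icc_eq_empty_of_lt hT]
  set ext : ℝ → ℝ := fun u => ω (projIcc 0 T hT u)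
  have hext : Continuous ext :=
    hc.comp_continuous (continuous_subtype_val.comp continuous_projIcc) fun u => (projIcc 0 T hT u).2
  have hsup : Continuous fun s => sSup ((fun u => ext (u * s)) '' Icc 0 1) :=
    isCompact_Icc.continuous_sSup (hext.comp (continuous_snd.mul continuous_fst))
  refine hsup.continuousOn.congr fun s hs => ?_
  have hext_eq : ∀ u ∈ Icc 0 s, ext u = ω u := fun u hu => by
    simp only [ext, projIcc_of_mem hT ⟨hu.1, hu.2.trans hs.2⟩]
  change sSup _ = sSup _
  rw [← image_image ext (· * s), image_mul_right_Icc zero_le_one hs.1, zero_mul, one_mul,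
    image_congr hext_eq]

end Mstar

section sigmaStar

variable {T : ℝ} {ψ : ℝ → (ℝ → ℝ) → ℝ} {ω : ℝ → ℝ}

lemma sigmaStar_mem_stopSet (hT : 0 ≤ T) (hc : ContinuousOn ω (Icc 0 T))
    (hψc : ContinuousOn (fun s => ψ s ω) (Icc 0 T)) (hψT : ψ T ω = 0) :
    sigmaStar T ψ ω ∈ stopSet T ψ ω := by
  have hclosed : IsClosed (stopSet T ψ ω) :=
    isClosed_Icc.isClosed_le hψc ((continuousOn_Mstar hc).sub hc)
  have hT_mem : T ∈ stopSet T ψ ω :=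
    ⟨⟨hT, le_rfl⟩, by rw [hψT, sub_nonneg]; exact le_Mstar hc ⟨hT, le_rfl⟩ le_rfl⟩
  exact hclosed.csInf_mem ⟨T, hT_mem⟩ ⟨0, fun s hs => hs.1.1⟩

lemma sigmaStar_congr {ω' : ℝ → ℝ} (hmem : sigmaStar T ψ ω ∈ stopSet T ψ ω)
    (hψ : ∀ s ∈ Icc 0 (sigmaStar T ψ ω), ψ s ω' = ψ s ω)
    (hω : ∀ s ∈ Icc 0 (sigmaStar T ψ ω), ω' s = ω s) :
    sigmaStar T ψ ω' = sigmaStar T ψ ω := by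
  set σ := sigmaStar T ψ ω
  have hstop_iff : ∀ s ∈ Icc 0 σ, s ∈ stopSet T ψ ω' ↔ s ∈ stopSet T ψ ω := fun s hs => by
    have hsub : ∀ u ∈ Icc 0 s, ω' u = ω u := fun u hu => hω u ⟨hu.1, hu.2.trans hs.2⟩
    simp only [stopSet, mem_ofPred_eq, hψ s hs, Mstar_congr hsub, hsub s ⟨hs.1, le_rfl⟩]
  have hσ_mem : σ ∈ stopSet T ψ ω' := (hstop_iff σ ⟨hmem.1.1, le_rfl⟩).2 hmem
  refine le_antisymm (csInf_le ⟨0, fun s hs => hs.1.1⟩ hσ_mem) (le_csInf ⟨σ, hσ_mem⟩ ?_)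
  intro s hs
  by_contra! hlt
  exact hlt.not_ge (csInf_le ⟨0, fun s hs => hs.1.1⟩ ((hstop_iff s ⟨hs.1.1, hlt.le⟩).1 hs))

lemma regret_sigmaStar (hmem : sigmaStar T ψ ω ∈ stopSet T ψ ω) :
    regret ψ (sigmaStar T ψ) ω = Mstar ω (sigmaStar T ψ ω) - ω (sigmaStar T ψ ω) :=
  max_eq_left hmem.2

end sigmaStar

lemma IsStoppingTime.lt_of_agree {T : ℝ} {Ω : Set (ℝ → ℝ)} {τ : (ℝ → ℝ) → ℝ}
    (hτ : IsStoppingTime T Ω τ) {t : ℝ} {ω ω' : ℝ → ℝ} (hω : ω ∈ Hist Ω t ω') (hω' : ω' ∈ Ω)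
    (ht : t ∈ Icc 0 T) (hlt : t < τ ω') : t < τ ω := by
  by_contra! hle
  exact hlt.not_ge ((hτ.2 ω hω.1 t ht hle ω' hω' fun s hs => (hω.2 s hs).symm).symm ▸ hle)

theorem stmt5_general (T : ℝ) (hT : 0 < T) (Ω : Set (ℝ → ℝ))
    (hΩ : ∀ ω ∈ Ω, ContinuousOn ω (Set.Icc 0 T))
    (ψ : ℝ → (ℝ → ℝ) → ℝ)
    (hψT : ∀ ω ∈ Ω, ψ T ω = 0)
    (hψc : ∀ ω ∈ Ω, ContinuousOn (fun t => ψ t ω) (Set.Icc 0 T))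
    (hψh : ∀ t ∈ Set.Icc 0 T, ∀ ω ∈ Ω, ∀ ω' ∈ Hist Ω t ω, ψ t ω' = ψ t ω)
    (t : ℝ) (ω : ℝ → ℝ)
    (τ : (ℝ → ℝ) → ℝ) (hτ : IsStoppingTime T Ω τ)
    (ω' : ℝ → ℝ) (hω' : ω' ∈ Hist Ω t ω)
    (hgt : sigmaStar T ψ ω' < τ ω')
    (ωh : ℝ → ℝ) (hωh : ωh ∈ Hist Ω (sigmaStar T ψ ω') ω')
    (hdown : ∀ u, sigmaStar T ψ ω' < u → u ≤ T → ωh u < ω' (sigmaStar T ψ ω')) :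
    Mstar ω' (sigmaStar T ψ ω') - ωh (τ ωh) ≤ regret ψ τ ωh ∧
    Mstar ω' (sigmaStar T ψ ω') - ω' (sigmaStar T ψ ω')
      < Mstar ω' (sigmaStar T ψ ω') - ωh (τ ωh) ∧
    Mstar ω' (sigmaStar T ψ ω') - ω' (sigmaStar T ψ ω')
      = regret ψ (sigmaStar T ψ) ωh := by
  have hω'Ω := hω'.1
  set σ := sigmaStar T ψ ω'
  have hσ : σ ∈ stopSet T ψ ω' :=
    sigmaStar_mem_stopSet hT.le (hΩ ω' hω'Ω) (hψc ω' hω'Ω) (hψT ω' hω'Ω)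
  have hσh_mem : sigmaStar T ψ ωh ∈ stopSet T ψ ωh :=
    sigmaStar_mem_stopSet hT.le (hΩ ωh hωh.1) (hψc ωh hωh.1) (hψT ωh hωh.1)
  have hagree : ∀ s ∈ Icc 0 σ, ωh s = ω' s := hωh.2
  have hM : Mstar ωh σ = Mstar ω' σ := Mstar_congr hagree
  have hσh : sigmaStar T ψ ωh = σ := sigmaStar_congr hσ
    (fun s hs => hψh s ⟨hs.1, hs.2.trans hσ.1.2⟩ ω' hω'Ω ωh (Hist_subset_Hist hs.2 hωh)) hagree
  have hτσ : σ < τ ωh := hτ.lt_of_agree hωh hω'Ω hσ.1 hgt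
  have hτT : τ ωh ≤ T := (hτ.1 ωh hωh.1).2
  have hMτ : Mstar ω' σ ≤ Mstar ωh (τ ωh) := hM ▸ Mstar_mono (hΩ ωh hωh.1) hσ.1.1 hτσ.le hτT
  have hregret : Mstar ωh (τ ωh) - ωh (τ ωh) ≤ regret ψ τ ωh := le_max_left _ _
  refine ⟨by linarith, by linarith [hdown (τ ωh) hτσ hτT], ?_⟩
  rw [regret_sigmaStar hσh_mem, hσh, hM, hagree σ ⟨hσ.1.1, le_rfl⟩]

/-- under the reaching assumption, if `τ` is a stopping time
admissible for `𝒜(t,ω)` and `ω' ∈ 𝒜(t,ω)` satisfies `τ(ω') > σ*(ω')`, then for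
any `ω̂ ∈ 𝒜(σ*(ω'),ω')` with `X_u(ω̂) < X_{σ*(ω')}(ω')` for `u ∈ (σ*(ω'),T]`:
`R(t,ω;τ,ω̂) ≥ X*_{σ*(ω')}(ω') − X_{τ(ω̂)}(ω̂) > X*_{σ*(ω')}(ω') − X_{σ*(ω')}(ω')
 = R(t,ω;σ*,ω̂)`. -/
theorem stmt5 (T : ℝ) (hT : 0 < T) (Ω : Set (ℝ → ℝ))
    (hΩ : ∀ ω ∈ Ω, ContinuousOn ω (Set.Icc 0 T))
    (ψ : ℝ → (ℝ → ℝ) → ℝ)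
    (hψT : ∀ ω ∈ Ω, ψ T ω = 0)
    (hψnn : ∀ ω ∈ Ω, ∀ t ∈ Set.Icc 0 T, 0 ≤ ψ t ω)
    (hψc : ∀ ω ∈ Ω, ContinuousOn (fun t => ψ t ω) (Set.Icc 0 T))
    (hψa : ∀ ω ∈ Ω, StrictAntiOn (fun t => ψ t ω) (Set.Icc 0 T))
    (hψh : ∀ t ∈ Set.Icc 0 T, ∀ ω ∈ Ω, ∀ ω' ∈ Hist Ω t ω, ψ t ω' = ψ t ω)
    (hreach : ∀ t ∈ Set.Icc 0 T, ∀ ω ∈ Ω,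
      ∃ ωh ∈ Hist Ω t ω, ∀ u, t < u → u ≤ T → ωh u < ω t)
    (t : ℝ) (ht : t ∈ Set.Icc 0 T) (ω : ℝ → ℝ) (hω : ω ∈ Ω)
    (τ : (ℝ → ℝ) → ℝ) (hτ : IsStoppingTime T Ω τ)
    (hadm : ∀ ω'' ∈ Hist Ω t ω, t ≤ τ ω'')
    (ω' : ℝ → ℝ) (hω' : ω' ∈ Hist Ω t ω)
    (hgt : sigmaStar T ψ ω' < τ ω')
    (ωh : ℝ → ℝ) (hωh : ωh ∈ Hist Ω (sigmaStar T ψ ω') ω')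
    (hdown : ∀ u, sigmaStar T ψ ω' < u → u ≤ T → ωh u < ω' (sigmaStar T ψ ω')) :
    Mstar ω' (sigmaStar T ψ ω') - ωh (τ ωh) ≤ regret ψ τ ωh ∧
    Mstar ω' (sigmaStar T ψ ω') - ω' (sigmaStar T ψ ω')
      < Mstar ω' (sigmaStar T ψ ω') - ωh (τ ωh) ∧
    Mstar ω' (sigmaStar T ψ ω') - ω' (sigmaStar T ψ ω')
      = regret ψ (sigmaStar T ψ) ωh :=
  stmt5_general T hT Ω hΩ ψ hψT hψc hψh t ω τ hτ ω' hω' hgt ωh hωh hdown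

end SellingRegret

end
end

section
/- At most one stopping time satisfies conditions (A) and (B): if σ₁ and σ₂ are stopping times such that for any stopping time τ and any ω ∈ Ω, (A) τ(ω) > σᵢ(ω) implies R(σᵢ(ω),ω;τ,ω') > R(σᵢ(ω),ω;σᵢ,ω') for some ω' ∈ 𝒜(σᵢ(ω),ω), and (B) τ(ω) < σᵢ(ω) implies R(τ(ω),ω;τ,ω') > R(τ(ω),ω;σᵢ,ω') for all ω' ∈ 𝒜(τ(ω),ω) (for i = 1,2), then σ₁ = σ₂. -/
open Set

noncomputable section

namespace SellingRegret

/-- Theorem 2, uniqueness: at most one stopping time satisfies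
conditions (A) and (B). -/
theorem stmt10 (T : ℝ) (hT : 0 < T) (Ω : Set (ℝ → ℝ))
    (hΩ : ∀ ω ∈ Ω, ContinuousOn ω (Set.Icc 0 T))
    (ψ : ℝ → (ℝ → ℝ) → ℝ)
    (σ₁ σ₂ : (ℝ → ℝ) → ℝ)
    (h₁ : IsStoppingTime T Ω σ₁) (h₂ : IsStoppingTime T Ω σ₂)
    (hc₁ : CondAB T Ω ψ σ₁) (hc₂ : CondAB T Ω ψ σ₂) :
    ∀ ω ∈ Ω, σ₁ ω = σ₂ ω := by
  intro ω hω
  by_contra hne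
  rcases lt_trichotomy (σ₁ ω) (σ₂ ω) with h | h | h
  · obtain ⟨ω', hω', hlt⟩ := (hc₁ σ₂ h₂ ω hω).1 h
    exact absurd ((hc₂ σ₁ h₁ ω hω).2 h ω' hω') (not_lt.2 hlt.le)
  · exact hne h
  · obtain ⟨ω', hω', hlt⟩ := (hc₂ σ₁ h₁ ω hω).1 h
    exact absurd ((hc₁ σ₂ h₂ ω hω).2 h ω' hω') (not_lt.2 hlt.le)

end SellingRegret

end
end

section
/- Let Ω = C([0,T],ℝ) and suppose ψ(t,ω) = ψ(t) does not depend on ω. Then for every t ∈ [0,T] and every ω ∈ Ω, the deterministic stopping time τ_T ≡ T is Pareto optimal with respect to 𝒜(t,ω): for every stopping time τ with t ≤ τ(ω'') for all ω'' ∈ 𝒜(t,ω) and τ(ω) < T, there exists ω' ∈ 𝒜(t,ω) with R(t,ω;τ_T,ω') < R(t,ω;τ,ω'). -/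
open Set

noncomputable section

namespace SellingRegret

/-- Example 1: for `Ω = C([0,T],ℝ)` and `ψ` independent of `ω`
(with `ψ(t) > 0` for `t < T`), the deterministic stopping time `τ_T ≡ T` is
Pareto optimal with respect to `𝒜(t,ω)`: for every stopping time `τ`
admissible for `𝒜(t,ω)` with `τ(ω) < T`, there exists `ω' ∈ 𝒜(t,ω)` with
`R(t,ω;τ_T,ω') < R(t,ω;τ,ω')`. -/
theorem stmt14 (T : ℝ) (hT : 0 < T)
    (ψ : ℝ → ℝ) (hψT : ψ T = 0)
    (hψnn : ∀ t ∈ Set.Icc 0 T, 0 ≤ ψ t)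
    (hψc : ContinuousOn ψ (Set.Icc 0 T))
    (hψa : StrictAntiOn ψ (Set.Icc 0 T))
    (hψpos : ∀ t ∈ Set.Ico 0 T, 0 < ψ t)
    (t : ℝ) (ht : t ∈ Set.Icc 0 T) (ω : ℝ → ℝ) (hω : ω ∈ OmegaC T)
    (τ : (ℝ → ℝ) → ℝ) (hτ : IsStoppingTime T (OmegaC T) τ)
    (hadm : ∀ ω'' ∈ Hist (OmegaC T) t ω, t ≤ τ ω'')
    (hlt : τ ω < T) :
    ∃ ω' ∈ Hist (OmegaC T) t ω,
      regret (fun u _ => ψ u) (fun _ => T) ω' < regret (fun u _ => ψ u) τ ω' := by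
  obtain ⟨hτ1, hτ2⟩ := hτ
  set u := τ ω with hu
  have huIcc : u ∈ Set.Icc 0 T := hτ1 ω hω
  have hu0 : 0 ≤ u := huIcc.1
  have huT : u ≤ T := hlt.le
  have htu : t ≤ u := hadm ω ⟨hω, fun s _ => rfl⟩
  set M0 := sSup (ω '' Set.Icc 0 u) with hM0
  have hbdd : BddAbove (ω '' Set.Icc 0 u) :=
    (isCompact_Icc.image_of_continuousOn
      (hω.mono (Set.Icc_subset_Icc le_rfl huT))).bddAbove
  have hωuM : ω u ≤ M0 := le_csSup hbdd ⟨u, ⟨hu0, le_rfl⟩, rfl⟩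
  have hTu : 0 < T - u := sub_pos.2 hlt
  set C := (M0 - ω u + 1) / (T - u) with hC
  have hCpos : 0 < C := div_pos (by linarith) hTu
  set ω' := fun s => ω (min s u) + (max s u - u) * C with hω'
  have hagree : ∀ s ∈ Set.Icc 0 u, ω' s = ω s := by
    intro s hs
    simp [hω', min_eq_left hs.2, max_eq_right hs.2]
  have hω'Ω : ω' ∈ OmegaC T := by
    apply ContinuousOn.add
    · apply hω.comp ((continuous_id.min continuous_const).continuousOn)
      intro s hs
      exact ⟨le_min hs.1 hu0, (min_le_right s u).trans huT⟩
    · exact (((continuous_id.max continuous_const).sub continuous_const).mul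
        continuous_const).continuousOn
  have hHist : ω' ∈ Hist (OmegaC T) t ω :=
    ⟨hω'Ω, fun s hs => hagree s ⟨hs.1, hs.2.trans htu⟩⟩
  have hτω' : τ ω' = u := hτ2 ω hω u huIcc le_rfl ω' hω'Ω hagree
  refine ⟨ω', hHist, ?_⟩
  have hω'T : ω' T = M0 + 1 := by
    have h1 : ω' T = ω u + (T - u) * C := by
      simp [hω', min_eq_right huT, max_eq_left huT]
    rw [h1, hC, mul_div_cancel₀ _ hTu.ne']
    ring
  have hub : ∀ x ∈ ω' '' Set.Icc 0 T, x ≤ ω' T := by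
    rintro x ⟨s, hs, rfl⟩
    rcases le_or_gt s u with h | h
    · rw [hagree s ⟨hs.1, h⟩, hω'T]
      have := le_csSup hbdd ⟨s, ⟨hs.1, h⟩, rfl⟩
      linarith
    · have h1 : ω' s = ω u + (s - u) * C := by
        simp [hω', min_eq_right h.le, max_eq_left h.le]
      have h2 : (s - u) * C ≤ (T - u) * C :=
        mul_le_mul_of_nonneg_right (by linarith [hs.2]) hCpos.le
      have h3 : ω u + (T - u) * C = M0 + 1 := by
        rw [hC, mul_div_cancel₀ _ hTu.ne']; ring
      rw [h1, hω'T]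
      linarith
  have hne' : (ω' '' Set.Icc 0 T).Nonempty := ⟨ω' 0, 0, ⟨le_rfl, hT.le⟩, rfl⟩
  have hMstar : Mstar ω' T ≤ ω' T := csSup_le hne' hub
  have hψu : 0 < ψ u := hψpos u ⟨hu0, hlt⟩
  have hleft : regret (fun u _ => ψ u) (fun _ => T) ω' ≤ 0 := by
    unfold regret
    exact max_le (by linarith) (le_of_eq hψT)
  have hright : ψ u ≤ regret (fun u _ => ψ u) τ ω' := by
    unfold regret
    rw [hτω']
    exact le_max_right _ _
  linarith

end SellingRegret

end
end

section
/- Let L₁, L₂ > 0, let Ω be the set of ω ∈ C([0,T],ℝ) such that −L₁(t−s) ≤ ω(t) − ω(s) ≤ L₂(t−s) for all 0 ≤ s < t ≤ T, and define σ*(ω) = inf{s ∈ [0,T] : X*_s(ω) − X_s(ω) ≥ L₂(T−s)}. Then for every t ∈ [0,T] and ω ∈ Ω with σ*(ω) ≥ t: σ*(ω) ≥ [L₁·t + L₂·T − (X*_t(ω) − X_t(ω))] / (L₁ + L₂), and this lower bound is attained at the trajectory ω̄ which agrees with ω on [0,t] and equals ω(t) − L₁(s−t) for s ∈ [t,T],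 i.e., σ*(ω̄) = [L₁·t + L₂·T − (X*_t(ω) − X_t(ω))] / (L₁ + L₂). -/
open Set

noncomputable section

namespace SellingRegret

/-- Example 2: in the Lipschitz corridor `Ω` with perfect
stopping time `σ*(ω) = inf{s ∈ [0,T] : X*_s(ω) − X_s(ω) ≥ L₂(T − s)}`, for
every `(t,ω)` with `σ*(ω) ≥ t`:
`σ*(ω) ≥ [L₁ t + L₂ T − (X*_t(ω) − X_t(ω))]/(L₁ + L₂)`, with equality attained
at the trajectory `ω̄` agreeing with `ω` on `[0,t]` and equal to
`ω(t) − L₁(s − t)` for `s ∈ [t,T]`. -/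
theorem stmt17 (T : ℝ) (hT : 0 < T) (L₁ L₂ : ℝ) (hL₁ : 0 < L₁) (hL₂ : 0 < L₂)
    (t : ℝ) (ht : t ∈ Set.Icc 0 T) (ω : ℝ → ℝ) (hω : ω ∈ OmegaL T L₁ L₂)
    (hσ : t ≤ sigmaStar T (fun s _ => L₂ * (T - s)) ω) :
    (L₁ * t + L₂ * T - (Mstar ω t - ω t)) / (L₁ + L₂)
      ≤ sigmaStar T (fun s _ => L₂ * (T - s)) ω ∧
    sigmaStar T (fun s _ => L₂ * (T - s))
        (fun s => if s ≤ t then ω s else ω t - L₁ * (s - t))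
      = (L₁ * t + L₂ * T - (Mstar ω t - ω t)) / (L₁ + L₂) := by
  obtain ⟨ht0, htT⟩ := ht
  have hL12 : (0:ℝ) < L₁ + L₂ := by linarith
  simp only [sigmaStar] at hσ ⊢
  set S : Set ℝ := {s | s ∈ Set.Icc 0 T ∧ L₂ * (T - s) ≤ Mstar ω s - ω s} with hSdef
  -- basic facts about Mstar for corridor trajectories
  have hnon : ∀ s : ℝ, 0 ≤ s → (ω '' Set.Icc 0 s).Nonempty := by
    intro s hs; exact ⟨ω 0, 0, ⟨le_rfl, hs⟩, rfl⟩
  have hsup_le : ∀ s b : ℝ, 0 ≤ s → (∀ u, 0 ≤ u → u ≤ s → ω u ≤ b) → Mstar ω s ≤ b := by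
    intro s b hs hb
    refine csSup_le (hnon s hs) ?_
    rintro x ⟨u, ⟨hu0, hus⟩, rfl⟩
    exact hb u hu0 hus
  have hbdd : ∀ s : ℝ, 0 ≤ s → s ≤ T → BddAbove (ω '' Set.Icc 0 s) := by
    intro s hs0 hsT
    refine ⟨ω 0 + L₂ * s, ?_⟩
    rintro x ⟨u, ⟨hu0, hus⟩, rfl⟩
    have h1 := (hω 0 u le_rfl hu0 (hus.trans hsT)).2
    have h2 : L₂ * (u - 0) ≤ L₂ * s := by
      apply mul_le_mul_of_nonneg_left (by linarith) hL₂.le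
    linarith
  have hle : ∀ s u : ℝ, 0 ≤ u → u ≤ s → s ≤ T → ω u ≤ Mstar ω s := by
    intro s u hu0 hus hsT
    exact le_csSup (hbdd s (hu0.trans hus) hsT) ⟨u, ⟨hu0, hus⟩, rfl⟩
  have hD0 : 0 ≤ Mstar ω t - ω t := by
    have := hle t t ht0 le_rfl htT; linarith
  have hTSmem : T ∈ S := by
    refine ⟨⟨hT.le, le_rfl⟩, ?_⟩
    have := hle T T (hT.le) le_rfl le_rfl
    nlinarith
  have hSbdd : BddBelow S := ⟨0, fun s hs => hs.1.1⟩
  have hmemge : ∀ s ∈ S, t ≤ s := by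
    intro s hs
    exact le_trans hσ (csInf_le hSbdd hs)
  -- key estimate: for s ≥ t, Mstar ω s ≤ D + L₁(s-t) + ω s
  have key : ∀ s : ℝ, t ≤ s → s ≤ T → Mstar ω s ≤ (Mstar ω t - ω t) + L₁ * (s - t) + ω s := by
    intro s hts hsT
    apply hsup_le s _ (ht0.trans hts)
    intro u hu0 hus
    by_cases hut : u ≤ t
    · have h1 := hle t u hu0 hut htT
      have h2 := (hω t s ht0 hts hsT).1
      have h3 : 0 ≤ L₁ * (s - t) := mul_nonneg hL₁.le (by linarith)
      linarith
    · push_neg at hut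
      have h2 := (hω u s (ht0.trans hut.le) hus hsT).1
      have h3 : L₁ * (s - u) ≤ L₁ * (s - t) :=
        mul_le_mul_of_nonneg_left (by linarith) hL₁.le
      linarith
  constructor
  · -- part 1: lower bound
    apply le_csInf ⟨T, hTSmem⟩
    intro s hs
    rw [div_le_iff₀ hL12]
    have hts := hmemge s hs
    have hk := key s hts hs.1.2
    have hc := hs.2
    nlinarith [hc, hk]
  · -- part 2: equality for ω̄
    set D := Mstar ω t - ω t with hDdef
    -- D ≤ L₂ (T - t)
    have hDle : D ≤ L₂ * (T - t) := by
      by_contra hcon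
      push_neg at hcon
      rcases eq_or_lt_of_le ht0 with h0 | h0
      · have hM0 : Mstar ω t = ω t := by
          rw [← h0]
          have : Set.Icc (0:ℝ) 0 = {0} := Set.Icc_self 0
          simp [Mstar, this, ← h0]
        rw [hDdef, hM0] at hcon
        nlinarith
      · set ε := (D - L₂ * (T - t)) / (L₁ + 2 * L₂) with hεdef
        have hL2' : (0:ℝ) < L₁ + 2 * L₂ := by linarith
        have hε : 0 < ε := div_pos (by linarith) hL2'
        set s := max 0 (t - ε) with hsdef
        have hs0 : 0 ≤ s := le_max_left _ _
        have hst : s < t := max_lt h0 (by linarith)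
        have hsT : s ≤ T := hst.le.trans htT
        have hts' : t - s ≤ ε := by
          have : t - ε ≤ s := le_max_right _ _
          linarith
        have hεmul : ε * (L₁ + 2 * L₂) = D - L₂ * (T - t) :=
          div_mul_cancel₀ _ (ne_of_gt hL2')
        have h1 : Mstar ω t ≤ Mstar ω s + L₂ * (t - s) := by
          apply hsup_le t _ ht0
          intro u hu0 hut
          by_cases hus : u ≤ s
          · have := hle s u hu0 hus hsT
            nlinarith
          · push_neg at hus
            have h2 := (hω s u hs0 hus.le (hut.trans htT)).2
            have h3 := hle s s hs0 le_rfl hsT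
            have h4 : L₂ * (u - s) ≤ L₂ * (t - s) :=
              mul_le_mul_of_nonneg_left (by linarith) hL₂.le
            linarith
        have h2 : ω s ≤ ω t + L₁ * (t - s) := by
          have := (hω s t hs0 hst.le htT).1
          linarith
        have hmul : (L₁ + 2 * L₂) * (t - s) ≤ (L₁ + 2 * L₂) * ε :=
          mul_le_mul_of_nonneg_left hts' hL2'.le
        have hsS : s ∈ S := by
          refine ⟨⟨hs0, hsT⟩, ?_⟩
          nlinarith [h1, h2, hεmul, hmul]
        have := hmemge s hsS
        linarith
    set sstar := (L₁ * t + L₂ * T - D) / (L₁ + L₂) with hssdef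
    have htss : t ≤ sstar := by
      rw [hssdef, le_div_iff₀ hL12]
      nlinarith [hDle]
    have hssT : sstar ≤ T := by
      rw [hssdef, div_le_iff₀ hL12]
      nlinarith [hD0]
    set ωb := (fun s => if s ≤ t then ω s else ω t - L₁ * (s - t)) with hωbdef
    have heqlow : ∀ u : ℝ, u ≤ t → ωb u = ω u := by
      intro u hu; simp [hωbdef, hu]
    have hval : ∀ u : ℝ, t ≤ u → ωb u = ω t - L₁ * (u - t) := by
      intro u hu
      by_cases h : u ≤ t
      · have : u = t := le_antisymm h hu
        subst this
        simp [hωbdef]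
      · simp [hωbdef, h]
    have hMblow : ∀ u : ℝ, u ≤ t → Mstar ωb u = Mstar ω u := by
      intro u hu
      have : ωb '' Set.Icc 0 u = ω '' Set.Icc 0 u := by
        apply Set.image_congr
        intro v hv
        exact heqlow v (hv.2.trans hu)
      simp only [Mstar, this]
    have hub : ∀ u : ℝ, t ≤ u → ∀ x ∈ ωb '' Set.Icc 0 u, x ≤ Mstar ω t := by
      intro u htu
      rintro x ⟨v, ⟨hv0, hvu⟩, rfl⟩
      by_cases hvt : v ≤ t
      · rw [heqlow v hvt]
        exact hle t v hv0 hvt htT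
      · push_neg at hvt
        rw [hval v hvt.le]
        have h1 := hle t t ht0 le_rfl htT
        have h2 : 0 ≤ L₁ * (v - t) := mul_nonneg hL₁.le (by linarith)
        linarith
    have hMbhigh : ∀ u : ℝ, t ≤ u → u ≤ T → Mstar ωb u = Mstar ω t := by
      intro u htu huT
      have hne : (ωb '' Set.Icc 0 u).Nonempty := ⟨ωb 0, 0, ⟨le_rfl, ht0.trans htu⟩, rfl⟩
      apply le_antisymm
      · exact csSup_le hne (hub u htu)
      · apply csSup_le (hnon t ht0)
        rintro x ⟨v, ⟨hv0, hvt⟩, rfl⟩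
        have : ω v = ωb v := (heqlow v hvt).symm
        rw [this]
        exact le_csSup ⟨Mstar ω t, hub u htu⟩ ⟨v, ⟨hv0, hvt.trans htu⟩, rfl⟩
    have hset : {s | s ∈ Set.Icc 0 T ∧ L₂ * (T - s) ≤ Mstar ωb s - ωb s} = Set.Icc sstar T := by
      ext s
      constructor
      · rintro ⟨⟨hs0, hsT⟩, hc⟩
        by_cases hts : t ≤ s
        · rw [hMbhigh s hts hsT, hval s hts] at hc
          refine ⟨?_, hsT⟩
          rw [hssdef, div_le_iff₀ hL12]
          nlinarith [hc]
        · exfalso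
          push_neg at hts
          rw [hMblow s hts.le, heqlow s hts.le] at hc
          have : s ∈ S := ⟨⟨hs0, hsT⟩, hc⟩
          have := hmemge s this
          linarith
      · rintro ⟨hss, hsT⟩
        have hts : t ≤ s := htss.trans hss
        refine ⟨⟨ht0.trans hts, hsT⟩, ?_⟩
        rw [hMbhigh s hts hsT, hval s hts]
        rw [hssdef, div_le_iff₀ hL12] at hss
        nlinarith [hss]
    calc sInf {s | s ∈ Set.Icc 0 T ∧ L₂ * (T - s) ≤ Mstar ωb s - ωb s}
        = sInf (Set.Icc sstar T) := by rw [hset]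
      _ = sstar := csInf_Icc hssT

end SellingRegret

end
end
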